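/- Let (T, M) be a local domain with residue field k and residue map π : T → k, and let D be an integral domain with fraction field k, viewed as a subring of k. If every flat overring of the pullback A := D ×_k T = π⁻¹(D) is a localization of A (at some multiplicative subset of A), then every flat overring of D is a localization of D (at some multiplicative subset of D). -/

import Mathlib

/-!
By Richman's criterion, an overring `S` of `R` is flat exactly when `(R :_R s) S = S` for every
`s ∈ S`. Both directions come from the equational criterion for flatness: a common element of
the colon ideals of the `xᵢ` trivialises a relation `∑ fᵢ xᵢ = 0`, and trivialising
`b • s - a • 1 = 0`, where `s = a / b`, produces colon elements generating `S`.

If `S` is a flat overring of `D`, the residue map `π : π⁻¹(S) → S` is surjective and its kernel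
lies in every colon ideal of `A = π⁻¹(D)`, so the criterion lifts: `π⁻¹(S)` is a flat overring
of `A`, hence `π⁻¹(S) = W⁻¹A`. Applying `π` gives `S = π(W)⁻¹D`.
-/

namespace Subring

section Colon

variable {F : Type*} [CommRing F]

def colon (R : Subring F) (s : F) : Ideal R where
  carrier := {r | (r : F) * s ∈ R}
  add_mem' {a b} ha hb := by simpa [add_mul] using R.add_mem ha hb
  zero_mem' := by simp
  smul_mem' c r hr := by simpa [mul_assoc] using R.mul_mem c.2 hr

@[simp]
theorem mem_colon {R : Subring F} {s : F} {r : R} : r ∈ R.colon s ↔ (r : F) * s ∈ R := Iff.rfl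

variable {R S : Subring F}

theorem coe_smul_of_le (hRS : R ≤ S) (r : R) (s : S) :
    letI := (inclusion hRS).toAlgebra
    ((r • s : S) : F) = r * s :=
  rfl

theorem flat_of_map_colon_eq_top (hRS : R ≤ S)
    (h : ∀ s : S, (R.colon s).map (inclusion hRS) = ⊤) :
    letI := (inclusion hRS).toAlgebra
    Module.Flat R S := by
  let := (inclusion hRS).toAlgebra
  refine Module.Flat.of_forall_isTrivialRelation fun {l f x} hfx => ?_
  set I := ∏ i, R.colon (x i)
  have hI : ∀ i, I ≤ R.colon (x i) := fun i =>
    Ideal.prod_le_inf.trans (Finset.inf_le (Finset.mem_univ i))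
  have hIS : I.map (inclusion hRS) = ⊤ := by
    change Ideal.mapHom _ (∏ i, _) = ⊤
    simp only [map_prod, Ideal.mapHom_apply, h, ← Ideal.one_eq_top, Finset.prod_const_one]
  obtain ⟨k, y, c, hyc⟩ := Submodule.mem_span_set'.mp ((Ideal.eq_top_iff_one _).mp hIS)
  choose c' hc' hcc' using fun j => (c j).2
  have hcy : ∑ j, (c' j : F) * y j = 1 := by
    simpa [← hcc', coe_smul_of_le, mul_comm] using congrArg Subtype.val hyc
  refine ⟨k, fun i j => ⟨c' j * x i, hI i (hc' j)⟩, y, fun i => Subtype.ext ?_,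
    fun j => Subtype.ext ?_⟩
  · calc (x i : F) = (∑ j, (c' j : F) * y j) * x i := by rw [hcy, one_mul]
      _ = _ := by simp [Finset.sum_mul, coe_smul_of_le, mul_right_comm]
  · have hfx' : ∑ i, (f i : F) * x i = 0 := by
      simpa [coe_smul_of_le] using congrArg Subtype.val hfx
    push_cast
    simp_rw [mul_left_comm _ (c' j : F)]
    rw [← Finset.mul_sum, hfx', mul_zero]

theorem map_colon_eq_top_of_flat [IsFractionRing R F] (hRS : R ≤ S)
    (hflat : letI := (inclusion hRS).toAlgebra; Module.Flat R S) (s : S) :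
    (R.colon s).map (inclusion hRS) = ⊤ := by
  let := (inclusion hRS).toAlgebra
  obtain ⟨⟨a, b⟩, hab⟩ := IsLocalization.surj (nonZeroDivisors R) (s : F)
  change (s : F) * b = a at hab
  have hrel : ∑ i, ![(b : R), -a] i • ![s, 1] i = 0 := by
    apply Subtype.ext
    simp [coe_smul_of_le, hab, mul_comm]
  obtain ⟨k, c, y, hy, hc⟩ := Module.Flat.iff_forall_isTrivialRelation.mp hflat hrel
  have hcolon (j : Fin k) : c 1 j ∈ R.colon s := by
    have hcj : (b : F) * c 0 j = a * c 1 j := by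
      simpa [Fin.sum_univ_two, neg_mul, add_neg_eq_zero] using congrArg Subtype.val (hc j)
    have hb : IsUnit (b : F) := IsLocalization.map_units F b
    rw [mem_colon, show (c 1 j : F) * s = c 0 j from hb.mul_left_cancel (by
      rw [hcj, ← hab]; ring)]
    exact (c 0 j).2
  rw [Ideal.eq_top_iff_one, show (1 : S) = ∑ j, c 1 j • y j by simpa using hy 1]
  exact Ideal.sum_mem _ fun j _ => by
    rw [Algebra.smul_def]
    exact Ideal.mul_mem_right _ _ (Ideal.mem_map_of_mem _ (hcolon j))

end Colon

section Pullback

variable {K k : Type*} [CommRing K] [CommRing k]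

theorem map_colon_eq_top_of_surjective {A B : Subring K} {D S : Subring k} (hAB : A ≤ B)
    (hDS : D ≤ S) (σ : B →+* S) (hσ : Function.Surjective σ)
    (hAD : ∀ x : B, (x : K) ∈ A ↔ (σ x : k) ∈ D) {b : B}
    (h : (D.colon (σ b)).map (inclusion hDS) = ⊤) :
    (A.colon b).map (inclusion hAB) = ⊤ := by
  set J := (A.colon b).map (inclusion hAB)
  have hmem {x : B} (hx : (σ x : k) ∈ D) (hxb : (σ x : k) * σ b ∈ D) : x ∈ J := by
    have hxA : (x : K) ∈ A := (hAD x).2 hx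
    have hxbA : (x : K) * b ∈ A := (hAD (x * b)).2 (by simpa using hxb)
    exact Ideal.mem_map_of_mem (inclusion hAB) (show ⟨x, hxA⟩ ∈ A.colon b from hxbA)
  have hker : RingHom.ker σ ≤ J := fun x hx => by
    rw [RingHom.mem_ker] at hx
    exact hmem (by simp [hx]) (by simp [hx])
  have hmap : J.map σ = ⊤ := by
    rw [eq_top_iff, ← h, Ideal.map_le_iff_le_comap]
    intro d hd
    obtain ⟨x, hx⟩ := hσ (inclusion hDS d)
    have hxd : (σ x : k) = d := congrArg Subtype.val hx
    rw [Ideal.mem_comap, ← hx]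
    exact Ideal.mem_map_of_mem σ (hmem (hxd ▸ d.2) (hxd ▸ hd))
  rw [← sup_eq_left.2 hker, ← Ideal.comap_map_of_surjective' σ hσ, hmap, Ideal.comap_top]

variable {T : Subring K} (π : T →+* k)

abbrev pullback (D : Subring k) : Subring K := (D.comap π).map T.subtype

theorem pullback_le (D : Subring k) : pullback π D ≤ T := by
  rintro _ ⟨t, -, rfl⟩
  exact t.2

theorem pullback_mono {D S : Subring k} (hDS : D ≤ S) : pullback π D ≤ pullback π S :=
  (gc_map_comap T.subtype).monotone_l fun _ hx => hDS hx

def pullbackResidue (D : Subring k) : pullback π D →+* D :=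
  (π.comp (inclusion (pullback_le π D))).codRestrict D fun ⟨_, t, ht, rfl⟩ => ht

theorem pullbackResidue_surjective (hπ : Function.Surjective π) (D : Subring k) :
    Function.Surjective (pullbackResidue π D) := fun d => by
  obtain ⟨t, ht⟩ := hπ d
  exact ⟨⟨t, t, show π t ∈ D from ht ▸ d.2, rfl⟩, Subtype.ext ht⟩

@[simp]
theorem coe_pullbackResidue (D : Subring k) (x : pullback π D) :
    (pullbackResidue π D x : k) = π ⟨x, pullback_le π D x.2⟩ :=
  rfl

variable {π}

theorem coe_mem_pullback_iff {D S : Subring k} (x : pullback π S) :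
    (x : K) ∈ pullback π D ↔ (pullbackResidue π S x : k) ∈ D := by
  obtain ⟨_, t, ht, rfl⟩ := x
  exact ⟨fun ⟨t', ht', h⟩ => Subtype.ext h ▸ ht', fun h => ⟨t, h, rfl⟩⟩

theorem pullbackResidue_comp_inclusion {D S : Subring k} (hDS : D ≤ S) :
    (pullbackResidue π S).comp (inclusion (pullback_mono π hDS)) =
      (inclusion hDS).comp (pullbackResidue π D) :=
  rfl

theorem ker_pullbackResidue_le {D S : Subring k} (hDS : D ≤ S) :
    RingHom.ker (pullbackResidue π S) ≤
      (RingHom.ker (pullbackResidue π D)).map (inclusion (pullback_mono π hDS)) := fun x hx => by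
  rw [RingHom.mem_ker, ← ZeroMemClass.coe_eq_zero, coe_pullbackResidue] at hx
  have hxD : (x : K) ∈ pullback π D := (coe_mem_pullback_iff x).2 (by simp [hx])
  refine Ideal.mem_map_of_mem _ (show (⟨x, hxD⟩ : pullback π D) ∈ _ from ?_)
  rw [RingHom.mem_ker, ← ZeroMemClass.coe_eq_zero, coe_pullbackResidue]
  exact hx

end Pullback

end Subring

theorem stmt_11 {K k : Type*} [Field K] [Field k] (T : Subring K)
    (π : T →+* k) (hπ : Function.Surjective π)
    (D : Subring k) [IsFractionRing D k]
    (hA : ∀ S : Subring K, ∀ hAS : (D.comap π).map T.subtype ≤ S,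
      @Module.Flat ((D.comap π).map T.subtype) S _ _
          (RingHom.toAlgebra (Subring.inclusion hAS)).toModule →
        ∃ W : Submonoid ((D.comap π).map T.subtype),
          @IsLocalization ((D.comap π).map T.subtype) _ W S _
            (RingHom.toAlgebra (Subring.inclusion hAS))) :
    ∀ S : Subring k, ∀ hDS : D ≤ S,
      @Module.Flat D S _ _ (RingHom.toAlgebra (Subring.inclusion hDS)).toModule →
        ∃ W : Submonoid D,
          @IsLocalization D _ W S _ (RingHom.toAlgebra (Subring.inclusion hDS)) := by
  intro S hDS hflat
  have hAB := Subring.pullback_mono π hDS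
  have hflatB := Subring.flat_of_map_colon_eq_top hAB fun b =>
    Subring.map_colon_eq_top_of_surjective hAB hDS _ (Subring.pullbackResidue_surjective π hπ S)
      Subring.coe_mem_pullback_iff (Subring.map_colon_eq_top_of_flat hDS hflat _)
  obtain ⟨W, hW⟩ := hA _ hAB hflatB
  let := (Subring.inclusion hAB).toAlgebra
  let := (Subring.inclusion hDS).toAlgebra
  exact ⟨_, IsLocalization.of_surjective W (Subring.pullback π S) _
    (Subring.pullbackResidue_surjective π hπ D) _ (Subring.pullbackResidue_surjective π hπ S)
    (Subring.pullbackResidue_comp_inclusion hDS) (Subring.ker_pullbackResidue_le hDS)⟩
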